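/- arXiv:1701.05430 — 2 statements merged into one kernel-verified Lean document; each statement's English description precedes it below -/
import Mathlib

section
/- Let K/k be a purely inseparable extension of characteristic p > 0. Then K is finite over its relative perfect closure rp(K/k) if and only if K is finite over k(K^p). -/
/-!
Common definitions: purely inseparable extension theory (r-bases, degree of
irrationality, relative perfect closure, modularity), following Fliouet,
"Extensions absolument lq-finies".
-/

open IntermediateField

noncomputable section

/-- `k(K^p)`: the intermediate field of `K/k` generated by the `p`-th powers of `K`. -/
def pClosure (k K : Type*) [Field k] [Field K] [Algebra k K] (p : ℕ) : IntermediateField k K :=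
  adjoin k {x : K | ∃ y : K, y ^ p = x}

/-- `k(K^{p^n})`. -/
def pnClosure (k K : Type*) [Field k] [Field K] [Algebra k K] (p n : ℕ) : IntermediateField k K :=
  adjoin k {x : K | ∃ y : K, y ^ p ^ n = x}

/-- `k(L^p)` for an intermediate field `L` of `Ω/k`. -/
def pClosureOf {k Ω : Type*} [Field k] [Field Ω] [Algebra k Ω] (p : ℕ)
    (L : IntermediateField k Ω) : IntermediateField k Ω :=
  adjoin k {x : Ω | ∃ y ∈ L, y ^ p = x}

/-- `B` is `r`-free over the intermediate field `L` (typically `L = k(K^p)`):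
no `x ∈ B` belongs to `L(B \ {x})`. -/
def RFreeOver {k K : Type*} [Field k] [Field K] [Algebra k K]
    (L : IntermediateField k K) (B : Set K) : Prop :=
  ∀ x ∈ B, x ∉ adjoin L (B \ {x})

/-- `B` is an `r`-basis of `K/k` : `K = k(K^p)(B)` and `B` is `r`-free over `k(K^p)`. -/
def RBasis (k K : Type*) [Field k] [Field K] [Algebra k K] (p : ℕ) (B : Set K) : Prop :=
  adjoin (pClosure k K p) B = ⊤ ∧ RFreeOver (pClosure k K p) B

/-- `B` is an `r`-basis of `L/F` where `F ≤ L` are intermediate fields of `Ω/k`: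
`L = F(L^p)(B)` and no `x ∈ B` lies in `F(L^p)(B \ {x})`. -/
def RBasisRel {k Ω : Type*} [Field k] [Field Ω] [Algebra k Ω] (p : ℕ)
    (F L : IntermediateField k Ω) (B : Set Ω) : Prop :=
  B ⊆ (L : Set Ω) ∧ F ⊔ pClosureOf p L ⊔ adjoin k B = L ∧
    ∀ x ∈ B, x ∉ F ⊔ pClosureOf p L ⊔ adjoin k (B \ {x})

/-- The degree of irrationality of a bounded-exponent extension:
the cardinality of an `r`-basis of `K/k`. -/
def diCard (k K : Type*) [Field k] [Field K] [Algebra k K] (p : ℕ) : Cardinal :=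
  sInf {c : Cardinal | ∃ B : Set K, RBasis k K p B ∧ Cardinal.mk B = c}

/-- `k^{p^{-n}} ∩ K = {x ∈ K | x^{p^n} ∈ k}`. -/
def expleq (k K : Type*) [Field k] [Field K] [Algebra k K] (p n : ℕ) : IntermediateField k K :=
  adjoin k {x : K | x ^ p ^ n ∈ (algebraMap k K).range}

/-- The degree of irrationality `di(K/k) = sup_n di(k^{p^{-n}} ∩ K / k)`. -/
def di (k K : Type*) [Field k] [Field K] [Algebra k K] (p : ℕ) : Cardinal :=
  ⨆ n : ℕ, diCard k (expleq k K p n) p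

/-- The relative perfect closure `rp(K/k)`: the largest intermediate field `L`
with `k(L^p) = L`. -/
def rp (k K : Type*) [Field k] [Field K] [Algebra k K] (p : ℕ) : IntermediateField k K :=
  sSup {L : IntermediateField k K | pClosureOf p L = L}

/-- `K/k` has unbounded exponent. -/
def UnboundedExp (k K : Type*) [Field k] [Field K] [Algebra k K] (p : ℕ) : Prop :=
  ∀ e : ℕ, ∃ x : K, x ^ p ^ e ∉ (algebraMap k K).range

/-- `K^{p^n}` as a subfield of `K`. -/
def pnPowers (K : Type*) [Field K] (p n : ℕ) : Subfield K :=
  Subfield.closure {x : K | ∃ y : K, y ^ p ^ n = x}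

/-- `K/k` is modular: for each `n`, `K^{p^n}` and `k` are linearly disjoint over
`K^{p^n} ∩ k`, i.e. every finite family of elements of `K^{p^n}` that is linearly
independent over `K^{p^n} ∩ k` remains linearly independent over `k`. -/
def Modular (k K : Type*) [Field k] [Field K] [Algebra k K] (p : ℕ) : Prop :=
  ∀ n : ℕ, ∀ s : Finset K, (↑s : Set K) ⊆ (pnPowers K p n : Set K) →
    LinearIndependent ↥(pnPowers K p n ⊓ (algebraMap k K).fieldRange)
      (fun x : s => (x : K)) →
    LinearIndependent ↥((algebraMap k K).fieldRange) (fun x : s => (x : K))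

/-- The exponent `o(a, F)` of `a` over an intermediate field `F`:
the least `m` with `a^{p^m} ∈ F`. -/
def expOf {k K : Type*} [Field k] [Field K] [Algebra k K] (p : ℕ)
    (F : IntermediateField k K) (a : K) : ℕ :=
  sInf {m : ℕ | a ^ p ^ m ∈ F}

/-- An intermediate field `L` of `K/k` is equiexponential of exponent `e` over `k`:
there is an `r`-basis `G` of `L/k` with `o(a, k(G \ {a})) = o(a, k) = e` for all `a ∈ G`. -/
def EquiExpOf {k K : Type*} [Field k] [Field K] [Algebra k K] (p : ℕ)
    (e : ℕ) (L : IntermediateField k K) : Prop :=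
  ∃ G : Set K, RBasisRel p ⊥ L G ∧
    ∀ a ∈ G, expOf p (adjoin k (G \ {a})) a = e ∧ expOf p (⊥ : IntermediateField k K) a = e

end

/-!
Write `Kₙ = k(K^{pⁿ})`. Since Frobenius is a ring endomorphism, `k(k(S)^p) = k(S^p)`,
so `Kₙ₊₁ = k(Kₙ^p)`; hence `rp(K/k) ≤ K₁`, and any `Kₙ` with `Kₙ₊₁ = Kₙ` lies in `rp(K/k)`.
Conversely, if `K = K₁ ⊔ A` with `A/k` finite (possible as `K/k` is algebraic), applying
Frobenius repeatedly gives `K = Kₙ ⊔ A` for every `n`, so `[K : Kₙ] ≤ [A : k]`. The descending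
chain `Kₙ` then has `[K : Kₙ]` maximal at some `N`, forcing `Kₙ₊₁ = Kₙ` there, and `K` is finite
over `K_N ≤ rp(K/k)`.
-/

open Module

section PClosure

variable {k K : Type*} [Field k] [Field K] [Algebra k K] (p : ℕ)

theorem pClosureOf_le (E : IntermediateField k K) : pClosureOf p E ≤ E :=
  adjoin_le_iff.mpr fun _ ⟨_, hy, hx⟩ => hx ▸ pow_mem hy p

theorem pClosureOf_mono : Monotone (pClosureOf p : IntermediateField k K → IntermediateField k K) :=
  fun _ _ hEF => adjoin.mono k _ _ fun _ ⟨y, hy, hx⟩ => ⟨y, hEF hy, hx⟩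

theorem pClosureOf_top : pClosureOf p (⊤ : IntermediateField k K) = pClosure k K p := by
  simp only [pClosureOf, pClosure, mem_top, true_and]

theorem pnClosure_zero : pnClosure k K p 0 = ⊤ :=
  eq_top_iff.mpr fun x _ => subset_adjoin k _ ⟨x, by rw [pow_zero, pow_one]⟩

theorem rp_le_pClosure : rp k K p ≤ pClosure k K p :=
  sSup_le fun L (hL : pClosureOf p L = L) =>
    hL ▸ pClosureOf_top (k := k) (K := K) p ▸ pClosureOf_mono p le_top

variable [ExpChar K p]

theorem pow_mem_adjoin_image_pow {S : Set K} {x : K} (hx : x ∈ adjoin k S) :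
    x ^ p ∈ adjoin k ((· ^ p) '' S) := by
  have hmap : frobenius K p x ∈ (adjoin k S).toSubfield.map (frobenius K p) :=
    Subfield.mem_map.mpr ⟨x, hx, rfl⟩
  rw [adjoin_toSubfield, RingHom.map_field_closure] at hmap
  refine Subfield.closure_mono ?_ hmap
  rintro _ ⟨y, hy | hy, rfl⟩
  · obtain ⟨r, rfl⟩ := hy
    exact Or.inl ⟨r ^ p, by rw [map_pow, frobenius_def]⟩
  · exact Or.inr ⟨y, hy, rfl⟩

theorem pClosureOf_adjoin (S : Set K) : pClosureOf p (adjoin k S) = adjoin k ((· ^ p) '' S) := by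
  refine le_antisymm (adjoin_le_iff.mpr ?_) (adjoin.mono k _ _ ?_)
  · rintro _ ⟨y, hy, rfl⟩
    exact pow_mem_adjoin_image_pow p hy
  · rintro _ ⟨y, hy, rfl⟩
    exact ⟨y, subset_adjoin k S hy, rfl⟩

theorem pClosureOf_sup (E F : IntermediateField k K) :
    pClosureOf p (E ⊔ F) = pClosureOf p E ⊔ pClosureOf p F := by
  rw [← adjoin_self k E, ← adjoin_self k F, ← adjoin_union, pClosureOf_adjoin,
    pClosureOf_adjoin, pClosureOf_adjoin, Set.image_union, adjoin_union]

theorem pnClosure_succ (n : ℕ) : pnClosure k K p (n + 1) = pClosureOf p (pnClosure k K p n) := by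
  simp only [pnClosure, pClosureOf_adjoin]
  congr 1
  ext x
  simp only [Set.mem_ofPred_eq, Set.mem_image, exists_exists_eq_and, ← pow_mul, ← pow_succ]

theorem pnClosure_sup_eq_top {A : IntermediateField k K} (hA : pClosure k K p ⊔ A = ⊤) (n : ℕ) :
    pnClosure k K p n ⊔ A = ⊤ := by
  induction n with
  | zero => rw [pnClosure_zero, top_sup_eq]
  | succ n ih =>
    refine eq_top_iff.mpr (hA ▸ sup_le ?_ le_sup_right)
    calc pClosure k K p = pClosureOf p (pnClosure k K p n ⊔ A) := by rw [ih, pClosureOf_top]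
      _ = pnClosure k K p (n + 1) ⊔ pClosureOf p A := by rw [pClosureOf_sup, pnClosure_succ]
      _ ≤ pnClosure k K p (n + 1) ⊔ A := sup_le_sup_left (pClosureOf_le p A) _

end PClosure

section Finiteness

variable {k K : Type*} [Field k] [Field K] [Algebra k K]

theorem finiteDimensional_of_le {E F : IntermediateField k K} (h : E ≤ F)
    [FiniteDimensional E K] : FiniteDimensional F K :=
  .right E (extendScalars h) K

theorem exists_finiteDimensional_sup_eq_top [Algebra.IsAlgebraic k K]
    (E : IntermediateField k K) [FiniteDimensional E K] :
    ∃ A : IntermediateField k K, FiniteDimensional k A ∧ E ⊔ A = ⊤ := by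
  obtain ⟨s, hs⟩ := fg_top E K
  refine ⟨adjoin k s, finiteDimensional_adjoin fun x _ => Algebra.IsIntegral.isIntegral x, ?_⟩
  rw [← restrictScalars_adjoin_eq_sup, hs, restrictScalars_top]

theorem rank_le_of_sup_eq_top {E A : IntermediateField k K} [FiniteDimensional k A]
    (h : E ⊔ A = ⊤) : Module.rank E K ≤ Module.rank k A := by
  have hadjoin : adjoin E (A : Set K) = ⊤ :=
    restrictScalars_injective k <| by
      rw [restrictScalars_adjoin_eq_sup, adjoin_self, h, restrictScalars_top]
  calc Module.rank E K = Module.rank E (adjoin E (A : Set K)) := by rw [hadjoin, rank_top']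
    _ ≤ Module.rank k A := adjoin_rank_le_of_isAlgebraic_right E A

theorem finiteDimensional_of_sup_eq_top {E A : IntermediateField k K} [FiniteDimensional k A]
    (h : E ⊔ A = ⊤) : FiniteDimensional E K :=
  rank_lt_aleph0_iff.mp ((rank_le_of_sup_eq_top h).trans_lt (rank_lt_aleph0_iff.mpr inferInstance))

theorem finrank_le_of_sup_eq_top {E A : IntermediateField k K} [FiniteDimensional k A]
    (h : E ⊔ A = ⊤) : finrank E K ≤ finrank k A :=
  Cardinal.toNat_le_toNat (rank_le_of_sup_eq_top h) (rank_lt_aleph0_iff.mpr inferInstance)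

theorem exists_succ_eq_of_finrank_le {E : ℕ → IntermediateField k K}
    (hE : ∀ n, E (n + 1) ≤ E n) [∀ n, FiniteDimensional (E n) K] {d : ℕ}
    (hd : ∀ n, finrank (E n) K ≤ d) : ∃ N, E (N + 1) = E N := by
  have hbdd : BddAbove (Set.range fun n => finrank (E n) K) := ⟨d, Set.forall_mem_range.mpr hd⟩
  obtain ⟨N, hN⟩ := Nat.sSup_mem (Set.range_nonempty _) hbdd
  exact ⟨N, eq_of_le_of_finrank_le' (hE N)
    ((le_csSup hbdd (Set.mem_range_self (N + 1))).trans_eq hN.symm)⟩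

end Finiteness

/-- A purely inseparable extension `K/k` is finite over its relative
perfect closure iff it is finite over `k(K^p)`. -/
theorem finiteDimensional_rp_iff_finiteDimensional_pClosure
    (p : ℕ) [Fact p.Prime] (k K : Type*) [Field k] [Field K] [Algebra k K] [CharP k p]
    [IsPurelyInseparable k K] :
    FiniteDimensional ↥(rp k K p) K ↔ FiniteDimensional ↥(pClosure k K p) K := by
  refine ⟨fun _ => finiteDimensional_of_le (rp_le_pClosure p), fun _ => ?_⟩
  have : ExpChar K p := expChar_of_injective_algebraMap (algebraMap k K).injective p
  obtain ⟨A, _, hA⟩ := exists_finiteDimensional_sup_eq_top (pClosure k K p)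
  have hsup := pnClosure_sup_eq_top p hA
  have (n : ℕ) : FiniteDimensional (pnClosure k K p n) K := finiteDimensional_of_sup_eq_top (hsup n)
  obtain ⟨N, hN⟩ := exists_succ_eq_of_finrank_le
    (fun n => (pnClosure_succ p n).trans_le (pClosureOf_le p _))
    (fun n => finrank_le_of_sup_eq_top (hsup n))
  have hperfect : pClosureOf p (pnClosure k K p N) = pnClosure k K p N :=
    (pnClosure_succ p N).symm.trans hN
  exact finiteDimensional_of_le (le_sSup hperfect : pnClosure k K p N ≤ rp k K p)
end

section
/- Let K/k be an lq-finite purely inseparable extension of characteristic p > 0 of unbounded exponent. Then the relative perfect closure rp(K/k) is of unbounded exponent over k; in particular rp(K/k) ≠ k. -/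
/-!
Common definitions: purely inseparable extension theory (r-bases, degree of
irrationality, relative perfect closure, modularity), following Fliouet,
"Extensions absolument lq-finies".
-/

open IntermediateField

/-!
Call an intermediate field `L` of `K/k` of unbounded exponent if it contains elements of
arbitrarily large exponent over `k`. These fields are closed under infima of chains: for each
`e`, the traces `L ∩ (k^{p^{-(e+1)}} ∩ K)` of the members of a chain live in a
finite-dimensional `k`-space, so the smallest trace is contained in every member, and it
contains an element of exponent exactly `e + 1`. Zorn's lemma gives a minimal such field `M`;
since `k(M^p) ⊆ M` is again of unbounded exponent, `k(M^p) = M`, hence `M ⊆ rp(K/k)`.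
-/

theorem IsChain.exists_inf_le_of_finiteDimensional {K V ι : Type*} [DivisionRing K]
    [AddCommGroup V] [Module K V] [Preorder ι] {c : Set ι} (hc : IsChain (· ≤ ·) c)
    (hne : c.Nonempty) {f : ι → Submodule K V} (hf : Monotone f) (E : Submodule K V)
    [FiniteDimensional K E] : ∃ i₀ ∈ c, ∀ i ∈ c, f i₀ ⊓ E ≤ f i := by
  let d : ι → ℕ := fun i => Module.finrank K ↥(f i ⊓ E)
  have hi₀ : Function.argminOn d c hne ∈ c := Function.argminOn_mem d c hne
  refine ⟨_, hi₀, fun i hi => ?_⟩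
  rcases hc.total hi₀ hi with h | h
  · exact inf_le_left.trans (hf h)
  · have hle : f i ⊓ E ≤ f (Function.argminOn d c hne) ⊓ E := inf_le_inf_right E (hf h)
    rw [← Submodule.eq_of_le_of_finrank_le hle (Function.argminOn_le d c hi)]
    exact inf_le_left

theorem pClosureOf_le_s18 {k Ω : Type*} [Field k] [Field Ω] [Algebra k Ω] (p : ℕ)
    (L : IntermediateField k Ω) : pClosureOf p L ≤ L := by
  rw [pClosureOf, adjoin_le_iff]
  rintro _ ⟨y, hy, rfl⟩
  exact pow_mem hy p

section

variable {k K : Type*} [Field k] [Field K] [Algebra k K] {p : ℕ}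

theorem exists_pow_pow_mem_expleq_succ [ExpChar k p] [IsPurelyInseparable k K] {x : K} {e : ℕ}
    (hx : x ^ p ^ e ∉ (algebraMap k K).range) :
    ∃ j, x ^ p ^ j ∈ expleq k K p (e + 1) ∧ (x ^ p ^ j) ^ p ^ e ∉ (algebraMap k K).range := by
  classical
  have hpow : ∀ a b : ℕ, (x ^ p ^ a) ^ p ^ b = x ^ p ^ (a + b) := fun a b => by
    rw [← pow_mul, ← pow_add]
  have hex : ∃ j, (x ^ p ^ j) ^ p ^ (e + 1) ∈ (algebraMap k K).range := by
    obtain ⟨m, hm⟩ := IsPurelyInseparable.pow_mem k p x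
    exact ⟨m, pow_mem (by simpa using hm) _⟩
  -- The least such `j` works: for `j = j' + 1`, minimality says `x ^ p ^ (j' + e + 1) ∉ k`.
  refine ⟨Nat.find hex, subset_adjoin _ _ (Nat.find_spec hex), ?_⟩
  rcases h : Nat.find hex with _ | j'
  · simpa using hx
  · have hmin := Nat.find_min hex (show j' < Nat.find hex by omega)
    rw [hpow, show j' + 1 + e = j' + (e + 1) by omega]
    simpa only [hpow] using hmin

variable (p) in
def HasUnboundedExp (L : IntermediateField k K) : Prop :=
  ∀ e : ℕ, ∃ x ∈ L, x ^ p ^ e ∉ (algebraMap k K).range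

namespace HasUnboundedExp

variable {L M : IntermediateField k K}

theorem top (hub : UnboundedExp k K p) : HasUnboundedExp p (⊤ : IntermediateField k K) :=
  fun e => (hub e).imp fun _ hx => ⟨mem_top, hx⟩

theorem mono (hL : HasUnboundedExp p L) (h : L ≤ M) : HasUnboundedExp p M :=
  fun e => (hL e).imp fun _ ⟨hxL, hx⟩ => ⟨h hxL, hx⟩

theorem ne_bot (hL : HasUnboundedExp p L) : L ≠ ⊥ := by
  rintro rfl
  obtain ⟨x, hx, hx0⟩ := hL 0
  exact hx0 (by simpa [mem_bot] using hx)

theorem pClosureOf (hL : HasUnboundedExp p L) : HasUnboundedExp p (pClosureOf p L) := by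
  intro e
  obtain ⟨x, hxL, hx⟩ := hL (e + 1)
  refine ⟨x ^ p, subset_adjoin _ _ ⟨x, hxL, rfl⟩, ?_⟩
  rwa [← pow_mul, ← pow_succ']

theorem exists_mem_expleq [ExpChar k p] [IsPurelyInseparable k K] (hL : HasUnboundedExp p L)
    (e : ℕ) : ∃ y ∈ L, y ∈ expleq k K p (e + 1) ∧ y ^ p ^ e ∉ (algebraMap k K).range := by
  obtain ⟨x, hxL, hx⟩ := hL e
  obtain ⟨j, hjE, hj⟩ := exists_pow_pow_mem_expleq_succ hx
  exact ⟨x ^ p ^ j, pow_mem hxL _, hjE, hj⟩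

theorem sInf_of_isChain [ExpChar k p] [IsPurelyInseparable k K]
    (hlq : ∀ n : ℕ, FiniteDimensional k ↥(expleq k K p n)) {c : Set (IntermediateField k K)}
    (hcS : ∀ L ∈ c, HasUnboundedExp p L) (hc : IsChain (· ≤ ·) c) (hne : c.Nonempty) :
    HasUnboundedExp p (sInf c) := by
  intro e
  have := hlq (e + 1)
  obtain ⟨L₀, hL₀, hL₀le⟩ := hc.exists_inf_le_of_finiteDimensional hne
    (f := fun L => Subalgebra.toSubmodule L.toSubalgebra) (fun _ _ h => h)
    (Subalgebra.toSubmodule (expleq k K p (e + 1)).toSubalgebra)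
  obtain ⟨y, hyL₀, hyE, hy⟩ := (hcS L₀ hL₀).exists_mem_expleq e
  exact ⟨y, mem_sInf.2 fun L hL => hL₀le L hL ⟨hyL₀, hyE⟩, hy⟩

end HasUnboundedExp

theorem exists_minimal_hasUnboundedExp [ExpChar k p] [IsPurelyInseparable k K]
    (hlq : ∀ n : ℕ, FiniteDimensional k ↥(expleq k K p n)) (hub : UnboundedExp k K p) :
    ∃ M : IntermediateField k K, Minimal (HasUnboundedExp p) M := by
  refine zorn_le₀ (α := (IntermediateField k K)ᵒᵈ) {L | HasUnboundedExp p L.ofDual}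
    fun c hcS hc => ?_
  rcases c.eq_empty_or_nonempty with rfl | hne
  · exact ⟨OrderDual.toDual ⊤, HasUnboundedExp.top hub, by simp⟩
  · refine ⟨OrderDual.toDual (sInf (OrderDual.toDual ⁻¹' c)), ?_,
      fun L hL => show sInf _ ≤ L.ofDual from sInf_le hL⟩
    exact HasUnboundedExp.sInf_of_isChain hlq hcS hc.symm hne

theorem Minimal.le_rp {M : IntermediateField k K} (hM : Minimal (HasUnboundedExp p) M) :
    M ≤ rp k K p :=
  le_sSup (hM.eq_of_le hM.prop.pClosureOf (pClosureOf_le_s18 p M))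

end

/-- For an `lq`-finite purely inseparable extension of unbounded
exponent, the relative perfect closure `rp(K/k)` has unbounded exponent over `k`;
in particular `rp(K/k) ≠ k`. -/
theorem rp_unboundedExp_of_lqFinite
    (p : ℕ) [Fact p.Prime] (k K : Type*) [Field k] [Field K] [Algebra k K] [CharP k p]
    [IsPurelyInseparable k K]
    (hlq : ∀ n : ℕ, FiniteDimensional k ↥(expleq k K p n))
    (hub : UnboundedExp k K p) :
    (∀ e : ℕ, ∃ x ∈ rp k K p, x ^ p ^ e ∉ (algebraMap k K).range) ∧
      rp k K p ≠ ⊥ := by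
  have : ExpChar k p := ExpChar.prime Fact.out
  obtain ⟨M, hM⟩ := exists_minimal_hasUnboundedExp hlq hub
  have hrp : HasUnboundedExp p (rp k K p) := hM.prop.mono hM.le_rp
  exact ⟨hrp, hrp.ne_bot⟩
end
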